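/- Suppose a ranking R satisfies, for every group ℓ ∈ [p] and position k ∈ [n], the expectation bound Σ_{i,j≤k} P_{iℓ} R_{ij} ≤ U_{kℓ}(1 + φγ_k) where φ = 1 − 1/(2√c), c > 1, δ ∈ (0,1/2], U_{kℓ} ≥ 1, and γ_k = 12·log(2np/δ)·max_ℓ √(1/U_{kℓ}). If group memberships are independent with Pr[G_ℓ ∋ i] = P_{iℓ}, then with probability at least 1 − δ, for all k ∈ [n] and ℓ ∈ [p], the number of items from G_ℓ among the top k positions of R is at most U_{kℓ}(1 + cγ_k). -/

import Mathlib

open MeasureTheory ProbabilityTheory Real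

set_option maxHeartbeats 1000000

set_option maxHeartbeats 1000000

lemma exp_quad (t : ℝ) (h0 : 0 ≤ t) (h1 : t ≤ 1) : Real.exp t ≤ 1 + t + (3/4) * t^2 := by
  have h := Real.exp_bound' h0 h1 (n := 5) (by norm_num)
  have h3 : t^3 ≤ t^2 := by nlinarith
  have h4 : t^4 ≤ t^2 := by nlinarith
  have h5 : t^5 ≤ t^2 := by nlinarith
  simp only [Finset.sum_range_succ, Nat.factorial] at h
  norm_num at h
  nlinarith [sq_nonneg t]

lemma arith_core (L U g φ E : ℝ) (hL : 0 < L) (hU : 1 ≤ U)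
    (hgU : 12*L ≤ g * Real.sqrt U) (hgle : g ≤ 12*L)
    (hφ0 : 1/2 < φ) (hφ1 : φ < 1) (hE : 1/2 ≤ E) :
    ∃ t, 0 ≤ t ∧ t ≤ 1 ∧
      (U*(1+φ*g)) * (Real.exp t - 1) - t * (U*(1+(φ+E)*g))
        ≤ Real.log 2 - L := by
  have hU0 : (0:ℝ) < U := by linarith
  have hsU1 : 1 ≤ Real.sqrt U := by
    rw [show (1:ℝ) = Real.sqrt 1 by simp]
    exact Real.sqrt_le_sqrt hU
  have hsUsq : Real.sqrt U * Real.sqrt U = U := Real.mul_self_sqrt hU0.le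
  have hUsU : Real.sqrt U ≤ U := by nlinarith
  have hg0 : 0 < g := by nlinarith [Real.sqrt_pos.mpr hU0]
  have hUg2 : 144*L^2 ≤ U*g^2 := by
    nlinarith [mul_le_mul hgU hgU (by positivity) (mul_nonneg hg0.le (Real.sqrt_nonneg U))]
  obtain ⟨B, hB⟩ : ∃ x, x = 1 + φ*g := ⟨_, rfl⟩
  obtain ⟨D, hD⟩ : ∃ x, x = E*g := ⟨_, rfl⟩
  have hB0 : 0 < B := by rw [hB]; nlinarith
  have hBle : B ≤ 1 + 12*L := by rw [hB]; nlinarith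
  have hDg : g/2 ≤ D := by rw [hD]; nlinarith
  have hD0 : 0 < D := by nlinarith
  have hkey : U*(1+(φ+E)*g) = U*(B+D) := by rw [hB, hD]; ring
  have hlog2 : (0.6931471803:ℝ) < Real.log 2 := Real.log_two_gt_d9
  by_cases h2D : 2*D ≤ 3*B
  · obtain ⟨t, ht⟩ : ∃ x, x = 2*D/(3*B) := ⟨_, rfl⟩
    have htB : t*(3*B) = 2*D := by rw [ht]; field_simp
    have ht0 : 0 ≤ t := by rw [ht]; exact le_of_lt (div_pos (by linarith) (by linarith))
    have ht1 : t ≤ 1 := by rw [ht, div_le_one (by linarith)]; linarith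
    refine ⟨t, ht0, ht1, ?_⟩
    have hexp := exp_quad t ht0 ht1
    have heq : U*B*(t + (3/4)*t^2) - t*(U*(B+D)) = -(1/2)*t*(U*D) := by
      linear_combination (t*U/4) * htB
    have htUD0 : 0 ≤ t*(U*D) := by
      apply mul_nonneg ht0; nlinarith
    have hfin : L - Real.log 2 ≤ (1/2)*t*(U*D) := by
      by_cases hLl : L ≤ Real.log 2
      · nlinarith
      · push_neg at hLl
        have hK0 : (0:ℝ) < 1+12*L := by linarith
        have hf1 : 2*D ≤ t*(3*(1+12*L)) := by nlinarith
        have hf2 : (2*D)*(U*D) ≤ (t*(3*(1+12*L)))*(U*D) :=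
          mul_le_mul_of_nonneg_right hf1 (by nlinarith)
        have hDsq : g^2/4 ≤ D^2 := by nlinarith
        have hUD2 : 36*L^2 ≤ U*D^2 := by nlinarith [mul_le_mul_of_nonneg_left hDsq hU0.le]
        have hlin : 6*(1+12*L)*(L-Real.log 2) ≤ 72*L^2 := by nlinarith
        have h6 : 6*(1+12*L)*(L-Real.log 2) ≤ 3*(1+12*L)*(t*(U*D)) := by nlinarith
        nlinarith [h6, hK0]
    calc (U*(1+φ*g)) * (Real.exp t - 1) - t * (U*(1+(φ+E)*g))
        ≤ U*B*(t + (3/4)*t^2) - t*(U*(B+D)) := by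
          rw [hkey, ← hB]
          nlinarith [mul_nonneg hU0.le hB0.le]
      _ = -(1/2)*t*(U*D) := heq
      _ ≤ Real.log 2 - L := by linarith
  · push_neg at h2D
    refine ⟨1, by norm_num, le_refl 1, ?_⟩
    have hexp1 : Real.exp 1 ≤ 11/4 := by
      have := exp_quad 1 (by norm_num) (le_refl 1)
      norm_num at this
      linarith
    have hUD : 3*L ≤ U*D/2 := by nlinarith [mul_le_mul_of_nonneg_left hDg hU0.le, mul_nonneg (sub_nonneg.2 hUsU) hg0.le, hgU]
    rw [hkey, ← hB]
    have hub : U*B*(Real.exp 1 - 1) ≤ U*B*(7/4) := by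
      have : 0 ≤ U*B := by positivity
      nlinarith
    nlinarith [mul_nonneg hU0.le hB0.le, mul_le_mul_of_nonneg_left (le_of_lt h2D) hU0.le]



lemma bern_mgf {Ω : Type*} [MeasurableSpace Ω] (μ : Measure Ω) [IsProbabilityMeasure μ]
    (Z : Ω → ℝ) (hZm : Measurable Z) (hZ01 : ∀ ω, Z ω = 0 ∨ Z ω = 1)
    (P : ℝ) (hP : P ∈ Set.Icc (0:ℝ) 1) (hmarg : μ {ω | Z ω = 1} = ENNReal.ofReal P)
    (W : ℝ) (hW : W ∈ Set.Icc (0:ℝ) 1) (t : ℝ) (ht : 0 ≤ t) :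
    mgf (fun ω => Z ω * W) μ t ≤ Real.exp (P * W * (Real.exp t - 1)) := by
  have hsm : MeasurableSet {ω | Z ω = 1} := hZm (measurableSet_singleton 1)
  have hZind : Z = Set.indicator {ω | Z ω = 1} (fun _ => (1:ℝ)) := by
    funext ω
    rcases hZ01 ω with h | h <;>
      simp [Set.indicator_apply, Set.mem_setOf_eq, h]
  have hZint : Integrable Z μ := by
    rw [hZind]; exact (integrable_const (1:ℝ)).indicator hsm
  have hZavg : ∫ ω, Z ω ∂μ = P := by
    rw [hZind, integral_indicator_const _ hsm, measureReal_def, hmarg, smul_eq_mul, mul_one,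
      ENNReal.toReal_ofReal hP.1]
  have hfun : (fun ω => Real.exp (t * (Z ω * W)))
      = fun ω => 1 + (Real.exp (t * W) - 1) * Z ω := by
    funext ω
    rcases hZ01 ω with h | h <;> simp [h] <;> ring
  have hmgf : mgf (fun ω => Z ω * W) μ t = 1 + (Real.exp (t * W) - 1) * P := by
    rw [mgf]
    rw [hfun]
    rw [integral_add (integrable_const 1) (hZint.const_mul _), integral_const,
      MeasureTheory.integral_const_mul, hZavg]
    simp
  rw [hmgf]
  -- exp(tW) ≤ 1 - W + W exp t
  have hconv : Real.exp (t * W) ≤ 1 - W + W * Real.exp t := by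
    have h := convexOn_exp.2 (Set.mem_univ (0:ℝ)) (Set.mem_univ t)
      (by linarith [hW.2] : (0:ℝ) ≤ 1 - W) hW.1 (by ring)
    simpa [smul_eq_mul, mul_comm] using h
  have h1 : (Real.exp (t * W) - 1) * P ≤ (W * (Real.exp t - 1)) * P := by
    apply mul_le_mul_of_nonneg_right _ hP.1
    nlinarith
  have h2 : 1 + (W * (Real.exp t - 1)) * P ≤ Real.exp (P * W * (Real.exp t - 1)) := by
    have := Real.add_one_le_exp (P * W * (Real.exp t - 1))
    linarith [this]
  calc 1 + (Real.exp (t * W) - 1) * P ≤ 1 + (W * (Real.exp t - 1)) * P := by linarith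
    _ ≤ _ := h2


lemma pair_bound {Ω : Type*} [MeasurableSpace Ω] (μ : Measure Ω) [IsProbabilityMeasure μ]
    {m : ℕ} (Z : Fin m → Ω → ℝ) (hZmeas : ∀ i, Measurable (Z i))
    (hZ01 : ∀ i ω, Z i ω = 0 ∨ Z i ω = 1)
    (hindep : iIndepFun Z μ)
    (P : Fin m → ℝ) (hP : ∀ i, P i ∈ Set.Icc (0:ℝ) 1)
    (hmarg : ∀ i, μ {ω | Z i ω = 1} = ENNReal.ofReal (P i))
    (W : Fin m → ℝ) (hW : ∀ i, W i ∈ Set.Icc (0:ℝ) 1)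
    (t a μ0 s : ℝ) (ht0 : 0 ≤ t) (hs : 0 ≤ s)
    (hμ0 : ∑ i, P i * W i ≤ μ0)
    (hkey : Real.exp (μ0 * (Real.exp t - 1) - t * a) ≤ s) :
    μ {ω | a < ∑ i, Z i ω * W i} ≤ ENNReal.ofReal s := by
  classical
  set Y : Fin m → Ω → ℝ := fun i ω => Z i ω * W i with hY
  have hYmeas : ∀ i, Measurable (Y i) := fun i => (hZmeas i).mul_const _
  set X : Ω → ℝ := fun ω => ∑ i, Y i ω with hX
  have hXsum : (∑ i, Y i) = X := by
    funext ω; simp [hX, Finset.sum_apply]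
  have hXeq : ∀ ω, X ω = ∑ i, Z i ω * W i := by
    intro ω; simp [hX, hY]
  have hXmeas : Measurable X :=
    Finset.univ.measurable_sum (fun i _ => hYmeas i)
  -- independence of the Y's
  have hYindep : iIndepFun Y μ := by
    have := hindep.comp (fun i => fun x : ℝ => x * W i)
      (fun i => measurable_id.mul_const _)
    exact this
  -- integrability of exp (t * X)
  have hXbd : ∀ ω, X ω ≤ m := by
    intro ω
    rw [hXeq]
    calc ∑ i, Z i ω * W i ≤ ∑ _i : Fin m, (1:ℝ) := by
          apply Finset.sum_le_sum
          intro i _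
          have h1 := (hW i).1; have h2 := (hW i).2
          rcases hZ01 i ω with h | h <;> rw [h] <;> nlinarith
      _ = m := by simp
  have hint : Integrable (fun ω => Real.exp (t * X ω)) μ := by
    refine Integrable.mono' (integrable_const (Real.exp (t * m)))
      ((hXmeas.const_mul t).exp.aestronglyMeasurable) (ae_of_all _ fun ω => ?_)
    rw [Real.norm_eq_abs, abs_of_pos (Real.exp_pos _), Real.exp_le_exp]
    exact mul_le_mul_of_nonneg_left (hXbd ω) ht0
  -- Chernoff
  have hcher := measure_ge_le_exp_mul_mgf (X := X) (μ := μ) a ht0 hint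
  -- mgf bound
  have hmgfsum : mgf X μ t = ∏ i, mgf (Y i) μ t := by
    rw [← hXsum]; exact hYindep.mgf_sum hYmeas Finset.univ
  have hmgf_le : mgf X μ t ≤ Real.exp (μ0 * (Real.exp t - 1)) := by
    rw [hmgfsum]
    calc ∏ i, mgf (Y i) μ t
        ≤ ∏ i, Real.exp (P i * W i * (Real.exp t - 1)) := by
          apply Finset.prod_le_prod (fun i _ => mgf_nonneg)
          intro i _
          exact bern_mgf μ (Z i) (hZmeas i) (hZ01 i) (P i) (hP i) (hmarg i)
            (W i) (hW i) t ht0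
      _ = Real.exp (∑ i, P i * W i * (Real.exp t - 1)) := by
          rw [Real.exp_sum]
      _ ≤ Real.exp (μ0 * (Real.exp t - 1)) := by
          rw [Real.exp_le_exp, ← Finset.sum_mul]
          apply mul_le_mul_of_nonneg_right hμ0
          have := Real.exp_le_exp.mpr ht0
          simp at this ⊢
          linarith [Real.one_le_exp ht0]
  have htail : (μ {ω | a ≤ X ω}).toReal ≤ s := by
    calc (μ {ω | a ≤ X ω}).toReal ≤ Real.exp (-t * a) * mgf X μ t := hcher
      _ ≤ Real.exp (-t * a) * Real.exp (μ0 * (Real.exp t - 1)) := by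
          exact mul_le_mul_of_nonneg_left hmgf_le (Real.exp_pos _).le
      _ = Real.exp (μ0 * (Real.exp t - 1) - t * a) := by
          rw [← Real.exp_add]; ring_nf
      _ ≤ s := hkey
  have hsubset : {ω | a < ∑ i, Z i ω * W i} ⊆ {ω | a ≤ X ω} := by
    intro ω hω
    rw [Set.mem_setOf_eq, hXeq]
    exact le_of_lt hω
  calc μ {ω | a < ∑ i, Z i ω * W i} ≤ μ {ω | a ≤ X ω} := measure_mono hsubset
    _ ≤ ENNReal.ofReal s := by
        rw [← ENNReal.ofReal_toReal (measure_ne_top μ _)]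
        exact ENNReal.ofReal_le_ofReal htail


/-- Proposition: any ranking feasible for the relaxed expectation constraints
satisfies the (cγ, δ)-constraint.  Here `R` is a ranking matrix, `P` gives the
independent group-membership probabilities, `Z i ℓ` is the 0/1 indicator that
item `i` belongs to group `ℓ`, and `γ k = 12·log(2np/δ)·max_ℓ √(1/U k ℓ)`. -/
theorem stmt_13 {Ω : Type*} [MeasurableSpace Ω] (μ : Measure Ω) [IsProbabilityMeasure μ]
    {m n p : ℕ} [NeZero p]
    (c δ : ℝ) (hc : 1 < c) (hδ0 : 0 < δ) (hδ : δ ≤ 1 / 2)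
    (P : Fin m → Fin p → ℝ) (hP : ∀ i ℓ, P i ℓ ∈ Set.Icc (0 : ℝ) 1)
    (U : Fin n → Fin p → ℝ) (hU : ∀ k ℓ, 1 ≤ U k ℓ)
    (R : Fin m → Fin n → ℝ) (hR01 : ∀ i j, R i j = 0 ∨ R i j = 1)
    (hcol : ∀ j, ∑ i, R i j = 1) (hrow : ∀ i, ∑ j, R i j ≤ 1)
    (γ : Fin n → ℝ)
    (hγ : ∀ k, γ k = 12 * Real.log (2 * n * p / δ) *
      (Finset.univ.sup' Finset.univ_nonempty fun ℓ => Real.sqrt (1 / U k ℓ)))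
    (Z : Fin m → Fin p → Ω → ℝ) (hZmeas : ∀ i ℓ, Measurable (Z i ℓ))
    (hZ01 : ∀ i ℓ ω, Z i ℓ ω = 0 ∨ Z i ℓ ω = 1)
    (hindep : ∀ ℓ, iIndepFun (fun i => Z i ℓ) μ)
    (hmarg : ∀ i ℓ, μ {ω | Z i ℓ ω = 1} = ENNReal.ofReal (P i ℓ))
    (hexp : ∀ ℓ k, ∑ i, ∑ j ∈ Finset.Iic k, P i ℓ * R i j ≤
      U k ℓ * (1 + (1 - 1 / (2 * Real.sqrt c)) * γ k)) :
    1 - ENNReal.ofReal δ ≤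
      μ {ω | ∀ k ℓ, ∑ i, ∑ j ∈ Finset.Iic k, Z i ℓ ω * R i j ≤
        U k ℓ * (1 + c * γ k)} := by
  classical
  rcases Nat.eq_zero_or_pos n with hn | hn
  · have hGu : {ω : Ω | ∀ k ℓ, ∑ i, ∑ j ∈ Finset.Iic k, Z i ℓ ω * R i j ≤
        U k ℓ * (1 + c * γ k)} = Set.univ := by
      apply Set.eq_univ_of_forall
      intro ω k
      exact absurd k.isLt (by omega)
    rw [hGu, MeasureTheory.measure_univ]
    exact tsub_le_self
  -- main case
  have hp : 0 < p := Nat.pos_of_ne_zero (NeZero.ne p)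
  have hn1 : (1:ℝ) ≤ (n:ℝ) := by exact_mod_cast hn
  have hp1 : (1:ℝ) ≤ (p:ℝ) := by exact_mod_cast hp
  have hnp0 : (0:ℝ) < (n:ℝ) * (p:ℝ) := by nlinarith
  set L := Real.log (2 * n * p / δ) with hLdef
  have hL0 : 0 < L := by
    apply Real.log_pos
    rw [lt_div_iff₀ hδ0]
    nlinarith
  have hlogid : Real.log (δ / ((n:ℝ) * (p:ℝ))) = Real.log 2 - L := by
    rw [hLdef, Real.log_div hδ0.ne' hnp0.ne', Real.log_div (by nlinarith) hδ0.ne',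
      show (2:ℝ) * n * p = 2 * ((n:ℝ)*(p:ℝ)) by ring, Real.log_mul (by norm_num) hnp0.ne']
    ring
  -- φ facts
  have hc0 : (0:ℝ) < c := by linarith
  have hs1 : 1 < Real.sqrt c := by
    rw [show (1:ℝ) = Real.sqrt 1 by simp]
    exact Real.sqrt_lt_sqrt (by norm_num) hc
  set φ := 1 - 1/(2*Real.sqrt c) with hφdef
  have hφ0 : 1/2 < φ := by
    rw [hφdef]
    have : 1/(2*Real.sqrt c) < 1/2 := by
      rw [div_lt_div_iff₀ (by linarith) (by norm_num)]; linarith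
    linarith
  have hφ1 : φ < 1 := by
    rw [hφdef]
    have : 0 < 1/(2*Real.sqrt c) := by positivity
    linarith
  have hE : 1/2 ≤ c - φ := by
    have hsc : Real.sqrt c ^ 2 = c := Real.sq_sqrt hc0.le
    have hprod : 0 ≤ (Real.sqrt c - 1)*(2*(Real.sqrt c)^2 + 2*Real.sqrt c - 1) := by nlinarith
    have hv : (1/(2*Real.sqrt c))*(2*Real.sqrt c) = 1 := by
      field_simp
    rw [hφdef]
    nlinarith [hsc, hprod, hv, hs1]
  -- per-pair bound
  have hpair : ∀ (k : Fin n) (ℓ : Fin p),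
      μ {ω | U k ℓ * (1 + c * γ k) < ∑ i, ∑ j ∈ Finset.Iic k, Z i ℓ ω * R i j} ≤
        ENNReal.ofReal (δ / ((n:ℝ) * (p:ℝ))) := by
    intro k ℓ
    set W : Fin m → ℝ := fun i => ∑ j ∈ Finset.Iic k, R i j with hWdef
    have hR0 : ∀ i j, 0 ≤ R i j := by
      intro i j; rcases hR01 i j with h | h <;> rw [h] <;> norm_num
    have hW : ∀ i, W i ∈ Set.Icc (0:ℝ) 1 := by
      intro i
      constructor
      · exact Finset.sum_nonneg fun j _ => hR0 i j
      · calc W i ≤ ∑ j, R i j :=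
              Finset.sum_le_sum_of_subset_of_nonneg (Finset.subset_univ _)
                (fun j _ _ => hR0 i j)
          _ ≤ 1 := hrow i
    -- gamma facts
    have hγk := hγ k
    set M := Finset.univ.sup' Finset.univ_nonempty fun ℓ' => Real.sqrt (1 / U k ℓ') with hM
    have hM1 : M ≤ 1 := by
      apply Finset.sup'_le
      intro ℓ' _
      rw [Real.sqrt_le_one, div_le_one (by linarith [hU k ℓ'])]
      linarith [hU k ℓ']
    have hMl : Real.sqrt (1 / U k ℓ) ≤ M := by
      rw [hM]; exact Finset.le_sup' (fun ℓ' => Real.sqrt (1 / U k ℓ')) (Finset.mem_univ ℓ)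
    have hgle : γ k ≤ 12 * L := by
      rw [hγk]
      nlinarith
    have hgU : 12 * L ≤ γ k * Real.sqrt (U k ℓ) := by
      have hUk0 : (0:ℝ) < U k ℓ := by linarith [hU k ℓ]
      have hss : Real.sqrt (1 / U k ℓ) * Real.sqrt (U k ℓ) = 1 := by
        rw [← Real.sqrt_mul (by positivity), one_div_mul_cancel hUk0.ne', Real.sqrt_one]
      have h1 : Real.sqrt (1 / U k ℓ) * Real.sqrt (U k ℓ) ≤ M * Real.sqrt (U k ℓ) :=
        mul_le_mul_of_nonneg_right hMl (Real.sqrt_nonneg _)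
      rw [hγk]
      nlinarith
    -- apply arith_core
    obtain ⟨t, ht0, ht1, hval⟩ :=
      arith_core L (U k ℓ) (γ k) φ (c - φ) hL0 (hU k ℓ) hgU hgle hφ0 hφ1 hE
    rw [show φ + (c - φ) = c by ring] at hval
    -- expectation bound
    have hμ0 : ∑ i, P i ℓ * W i ≤ U k ℓ * (1 + φ * γ k) := by
      have := hexp ℓ k
      rw [hφdef]
      calc ∑ i, P i ℓ * W i = ∑ i, ∑ j ∈ Finset.Iic k, P i ℓ * R i j := by
            apply Finset.sum_congr rfl
            intro i _
            rw [hWdef, Finset.mul_sum]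
        _ ≤ _ := this
    have hkey : Real.exp ((U k ℓ * (1 + φ * γ k)) * (Real.exp t - 1)
        - t * (U k ℓ * (1 + c * γ k))) ≤ δ / ((n:ℝ) * (p:ℝ)) := by
      have hpos : 0 < δ / ((n:ℝ) * (p:ℝ)) := by positivity
      rw [← Real.exp_log hpos, Real.exp_le_exp, hlogid]
      exact hval
    have hbd := pair_bound μ (fun i => Z i ℓ) (fun i => hZmeas i ℓ) (fun i => hZ01 i ℓ)
      (hindep ℓ) (fun i => P i ℓ) (fun i => hP i ℓ) (fun i => hmarg i ℓ) W hW
      t (U k ℓ * (1 + c * γ k)) (U k ℓ * (1 + φ * γ k)) (δ / ((n:ℝ) * (p:ℝ)))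
      ht0 (by positivity) hμ0 hkey
    have hsetEq : {ω | U k ℓ * (1 + c * γ k) < ∑ i, ∑ j ∈ Finset.Iic k, Z i ℓ ω * R i j}
        = {ω | U k ℓ * (1 + c * γ k) < ∑ i, Z i ℓ ω * W i} := by
      ext ω
      simp only [Set.mem_setOf_eq, hWdef, Finset.mul_sum]
    rw [hsetEq]
    exact hbd
  -- union bound
  set G := {ω : Ω | ∀ k ℓ, ∑ i, ∑ j ∈ Finset.Iic k, Z i ℓ ω * R i j ≤
      U k ℓ * (1 + c * γ k)} with hGdef
  have hSmeas : ∀ (k : Fin n) (ℓ : Fin p),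
      Measurable fun ω => ∑ i, ∑ j ∈ Finset.Iic k, Z i ℓ ω * R i j :=
    fun k ℓ => Finset.univ.measurable_sum fun i _ =>
      (Finset.Iic k).measurable_sum fun j _ => (hZmeas i ℓ).mul_const _
  have hGi : G = ⋂ k, ⋂ ℓ, {ω | ∑ i, ∑ j ∈ Finset.Iic k, Z i ℓ ω * R i j ≤
      U k ℓ * (1 + c * γ k)} := by
    ext ω; simp [hGdef, Set.mem_iInter]
  have hGm : MeasurableSet G := by
    rw [hGi]
    exact MeasurableSet.iInter fun k => MeasurableSet.iInter fun ℓ =>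
      measurableSet_le (hSmeas k ℓ) measurable_const
  have hGc : μ Gᶜ ≤ ENNReal.ofReal δ := by
    have hGcsub : Gᶜ ⊆ ⋃ k, ⋃ ℓ, {ω | U k ℓ * (1 + c * γ k) <
        ∑ i, ∑ j ∈ Finset.Iic k, Z i ℓ ω * R i j} := by
      intro ω hω
      rw [hGi] at hω
      simp only [Set.compl_iInter, Set.mem_iUnion, Set.mem_compl_iff,
        Set.mem_setOf_eq, not_le] at hω ⊢
      exact hω
    calc μ Gᶜ ≤ μ (⋃ k, ⋃ ℓ, {ω | U k ℓ * (1 + c * γ k) <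
          ∑ i, ∑ j ∈ Finset.Iic k, Z i ℓ ω * R i j}) := MeasureTheory.measure_mono hGcsub
      _ ≤ ∑ k : Fin n, μ (⋃ ℓ, {ω | U k ℓ * (1 + c * γ k) <
          ∑ i, ∑ j ∈ Finset.Iic k, Z i ℓ ω * R i j}) := by
          rw [← tsum_fintype (L := SummationFilter.unconditional _)]
          exact MeasureTheory.measure_iUnion_le _
      _ ≤ ∑ k : Fin n, ∑ ℓ : Fin p, μ {ω | U k ℓ * (1 + c * γ k) <
          ∑ i, ∑ j ∈ Finset.Iic k, Z i ℓ ω * R i j} := by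
          apply Finset.sum_le_sum
          intro k _
          rw [← tsum_fintype (L := SummationFilter.unconditional _)]
          exact MeasureTheory.measure_iUnion_le _
      _ ≤ ∑ _k : Fin n, ∑ _ℓ : Fin p, ENNReal.ofReal (δ / ((n:ℝ) * (p:ℝ))) := by
          apply Finset.sum_le_sum
          intro k _
          apply Finset.sum_le_sum
          intro ℓ _
          exact hpair k ℓ
      _ = (n * p : ℕ) • ENNReal.ofReal (δ / ((n:ℝ) * (p:ℝ))) := by
          simp [Finset.sum_const, Finset.card_univ, mul_smul]
      _ = ENNReal.ofReal δ := by
          rw [nsmul_eq_mul]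
          rw [show ((n * p : ℕ) : ENNReal) = ENNReal.ofReal ((n:ℝ) * (p:ℝ)) by
            rw [← ENNReal.ofReal_natCast]; congr 1; push_cast; ring]
          rw [← ENNReal.ofReal_mul (by positivity)]
          congr 1
          field_simp
  have hGG := MeasureTheory.measure_add_measure_compl (μ := μ) hGm
  rw [MeasureTheory.measure_univ] at hGG
  calc 1 - ENNReal.ofReal δ ≤ 1 - μ Gᶜ := tsub_le_tsub_left hGc 1
    _ ≤ μ G := by
        rw [tsub_le_iff_right]
        exact le_of_eq hGG.symm
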